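/- Let G be a finite group, n an odd positive integer, and ρ : G → GL(n,ℂ) an irreducible self-dual representation (there is an invertible matrix P with ρ(g)ᵀ * P * ρ(g) = P for all g ∈ G). Let p be an odd prime and A a normal abelian subgroup of G with aᵖ = 1 for all a ∈ A. Then A is contained in the kernel of ρ. (Equivalently, as in the proof of Proposition C in Section 10: if a faithful irreducible self-dual representation of odd dimension restricts faithfully to a nontrivial normal elementary abelian p-subgroup, then p = 2.) -/

import Mathlib

open Matrix
open scoped MatrixGroups

/-- A representation `ρ : G → GL(n,ℂ)` is irreducible if the only subspaces of `ℂⁿ`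
invariant under all `ρ(g)` are `0` and everything. -/
def IsIrrep {n : Type*} [Fintype n] [DecidableEq n] {G : Type*} [Group G]
    (ρ : G →* GL n ℂ) : Prop :=
  ∀ W : Submodule ℂ (n → ℂ),
    (∀ g : G, ∀ v ∈ W, (ρ g : Matrix n n ℂ).mulVec v ∈ W) → W = ⊥ ∨ W = ⊤

lemma isIntegral_multiset_sum (s : Multiset ℂ) (h : ∀ x ∈ s, IsIntegral ℤ x) :
    IsIntegral ℤ s.sum := by
  induction s using Multiset.induction_on with
  | empty => simpa using isIntegral_zero
  | cons a s ih =>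
    rw [Multiset.sum_cons]
    exact (h _ (Multiset.mem_cons_self _ _)).add (ih fun x hx => h x (Multiset.mem_cons_of_mem hx))

open Polynomial in
lemma root_pow_eq_one {n p : ℕ} {M : Matrix (Fin n) (Fin n) ℂ} (hM : M ^ p = 1)
    {μ : ℂ} (hμ : μ ∈ M.charpoly.roots) : μ ^ p = 1 := by
  have hroot : Polynomial.eval μ M.charpoly = 0 :=
    (Polynomial.mem_roots (M.charpoly_monic.ne_zero)).1 hμ
  have hdet : (μ • (1 : Matrix (Fin n) (Fin n) ℂ) - M).det = 0 := by
    have h1 : (Polynomial.evalRingHom μ) ((charmatrix M).det) = 0 := by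
      simpa [Matrix.charpoly] using hroot
    rw [RingHom.map_det] at h1
    convert h1 using 2
    ext i j
    by_cases hij : i = j
    · subst hij
      simp [charmatrix_apply_eq, Matrix.one_apply_eq]
    · simp [charmatrix_apply_ne _ _ _ hij, Matrix.one_apply_ne hij]
  obtain ⟨v, hv0, hv⟩ := (Matrix.exists_mulVec_eq_zero_iff).2 hdet
  have hMv : M *ᵥ v = μ • v := by
    rw [Matrix.sub_mulVec, Matrix.smul_mulVec, Matrix.one_mulVec, sub_eq_zero] at hv
    exact hv.symm
  have key : ∀ k : ℕ, (M ^ k) *ᵥ v = μ ^ k • v := by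
    intro k
    induction k with
    | zero => simp [Matrix.one_mulVec]
    | succ k ih =>
      rw [pow_succ', pow_succ', ← Matrix.mulVec_mulVec, ih, Matrix.mulVec_smul, hMv,
        smul_smul, mul_comm]
  have hvp := key p
  rw [hM, Matrix.one_mulVec] at hvp
  obtain ⟨i, hi⟩ := Function.ne_iff.1 hv0
  have h2 := congrFun hvp i
  simp only [Pi.smul_apply, smul_eq_mul, Pi.zero_apply] at h2 hi
  have h3 : (μ ^ p - 1) * v i = 0 := by linear_combination -h2
  rcases mul_eq_zero.1 h3 with h | h
  · exact sub_eq_zero.1 h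
  · exact absurd h hi


lemma sum_involution_even {α β : Type*} [DecidableEq α] [CommRing β] (s : Finset α)
    (f : α → β) (σ : α → α) (hmem : ∀ a ∈ s, σ a ∈ s) (hinv : ∀ a ∈ s, σ (σ a) = a)
    (hne : ∀ a ∈ s, σ a ≠ a) (hf : ∀ a ∈ s, f (σ a) = f a) :
    ∃ z : β, ∑ a ∈ s, f a = 2 * z := by
  induction s using Finset.strongInduction with
  | _ s ih =>
    rcases s.eq_empty_or_nonempty with rfl | ⟨x, hx⟩
    · exact ⟨0, by simp⟩
    · have hσx : σ x ∈ s := hmem x hx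
      have hxne : σ x ≠ x := hne x hx
      have hsub : {x, σ x} ⊆ s := by
        intro y hy
        rcases Finset.mem_insert.1 hy with rfl | hy
        · exact hx
        · rw [Finset.mem_singleton.1 hy]; exact hσx
      have hss : s \ {x, σ x} ⊂ s := by
        refine Finset.ssubset_iff_of_subset (Finset.sdiff_subset) |>.2 ⟨x, hx, ?_⟩
        simp
      have hmem' : ∀ a ∈ s \ {x, σ x}, σ a ∈ s \ {x, σ x} := by
        intro a ha
        obtain ⟨has, hanot⟩ := Finset.mem_sdiff.1 ha
        simp only [Finset.mem_insert, Finset.mem_singleton, not_or] at hanot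
        refine Finset.mem_sdiff.2 ⟨hmem a has, ?_⟩
        simp only [Finset.mem_insert, Finset.mem_singleton, not_or]
        constructor
        · intro h
          exact hanot.2 (by rw [← hinv a has, h])
        · intro h
          apply hanot.1
          have := congrArg σ h
          rw [hinv a has, hinv x hx] at this
          exact this
      obtain ⟨z, hz⟩ := ih (s \ {x, σ x}) hss hmem'
        (fun a ha => hinv a (Finset.mem_sdiff.1 ha).1)
        (fun a ha => hne a (Finset.mem_sdiff.1 ha).1)
        (fun a ha => hf a (Finset.mem_sdiff.1 ha).1)
      refine ⟨z + f x, ?_⟩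
      rw [← Finset.sum_sdiff hsub, hz, Finset.sum_pair (Ne.symm hxne), hf x hx]
      ring

set_option maxHeartbeats 1000000 in
set_option synthInstance.maxHeartbeats 1000000 in
/-- Step in the proof of Proposition C (Section 10): if `ρ` is an irreducible self-dual
representation of a finite group `G` of odd dimension `n`, `p` is an odd prime, and `A`
is a normal abelian subgroup of `G` of exponent dividing `p`, then `A ⊆ ker ρ`. -/
theorem stmt11 {G : Type*} [Group G] [Finite G] {n : ℕ} (hn : Odd n) (hpos : 0 < n)
    (ρ : G →* GL (Fin n) ℂ) (hirr : IsIrrep ρ)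
    (P : Matrix (Fin n) (Fin n) ℂ) (hP : IsUnit P)
    (hsd : ∀ g : G, (ρ g : Matrix (Fin n) (Fin n) ℂ).transpose * P *
      (ρ g : Matrix (Fin n) (Fin n) ℂ) = P)
    (p : ℕ) (hp : p.Prime) (hodd : Odd p)
    (A : Subgroup G) (hA : A.Normal)
    (hab : ∀ a ∈ A, ∀ b ∈ A, a * b = b * a)
    (hexp : ∀ a ∈ A, a ^ p = 1) :
    ∀ a ∈ A, ρ a = 1 := by
  classical
  haveI : Fintype ↥A := Fintype.ofFinite ↥A
  set Φ : G → Matrix (Fin n) (Fin n) ℂ := fun g => (ρ g : Matrix (Fin n) (Fin n) ℂ) with hΦ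
  have Φmul : ∀ g h : G, Φ g * Φ h = Φ (g * h) := by
    intro g h; simp only [Φ, ← Units.val_mul, ← _root_.map_mul]
  have Φone : Φ 1 = 1 := by simp only [Φ, _root_.map_one, Units.val_one]
  -- trace symmetry from self-duality
  have htr : ∀ g : G, (Φ g⁻¹).trace = (Φ g).trace := by
    intro g
    have e1 : Φ g * Φ g⁻¹ = 1 := by rw [Φmul, mul_inv_cancel, Φone]
    have h2 : (Φ g)ᵀ * P = P * Φ g⁻¹ := by
      have := congrArg (· * Φ g⁻¹) (hsd g)
      simpa only [mul_assoc, show (ρ g : Matrix (Fin n) (Fin n) ℂ) * Φ g⁻¹ = 1 from e1, mul_one] using this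
    have hu : (↑(hP.unit⁻¹) : Matrix (Fin n) (Fin n) ℂ) * P = 1 := hP.val_inv_mul
    have hu2 : P * (↑(hP.unit⁻¹) : Matrix (Fin n) (Fin n) ℂ) = 1 := hP.mul_val_inv
    have h3 : Φ g⁻¹ = (↑(hP.unit⁻¹) : Matrix (Fin n) (Fin n) ℂ) * ((Φ g)ᵀ * P) := by
      have h4 := congrArg (fun X => (↑(hP.unit⁻¹) : Matrix (Fin n) (Fin n) ℂ) * X) h2
      rw [← mul_assoc, ← mul_assoc, hu, one_mul] at h4
      rw [← h4, mul_assoc]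
    rw [h3, Matrix.trace_mul_comm, mul_assoc, hu2, mul_one, Matrix.trace_transpose]
  have hΦpow : ∀ a ∈ A, (Φ a) ^ p = 1 := by
    intro a ha
    simp only [Φ, ← Units.val_pow_eq_pow_val, ← _root_.map_pow, hexp a ha, _root_.map_one, Units.val_one]
  -- order of elements of A divides p
  have hApow : ∀ a : ↥A, a ^ p = 1 := by
    intro a
    apply Subtype.ext
    push_cast
    exact hexp ↑a a.2
  -- the fixed subspace
  let W : Submodule ℂ (Fin n → ℂ) :=
    { carrier := {v | ∀ a ∈ A, (Φ a) *ᵥ v = v}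
      add_mem' := fun hx hy a ha => by rw [Matrix.mulVec_add, hx a ha, hy a ha]
      zero_mem' := fun a ha => by rw [Matrix.mulVec_zero]
      smul_mem' := fun c x hx a ha => by rw [Matrix.mulVec_smul, hx a ha] }
  have hmemW : ∀ v : Fin n → ℂ, v ∈ W ↔ ∀ a ∈ A, (Φ a) *ᵥ v = v := fun v => Iff.rfl
  have hinv : ∀ g : G, ∀ v ∈ W, (Φ g) *ᵥ v ∈ W := by
    intro g v hv a ha
    have hconj : g⁻¹ * a * g ∈ A := by
      have := hA.conj_mem a ha g⁻¹
      simpa using this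
    rw [Matrix.mulVec_mulVec, Φmul]
    have : a * g = g * (g⁻¹ * a * g) := by group
    rw [this, ← Φmul, ← Matrix.mulVec_mulVec, hv _ hconj]
  set k := Fintype.card ↥A with hk
  have hk0 : (k : ℂ) ≠ 0 := Nat.cast_ne_zero.2 Fintype.card_ne_zero
  set N : Matrix (Fin n) (Fin n) ℂ := ∑ a : ↥A, Φ ↑a with hN
  set Navg : Matrix (Fin n) (Fin n) ℂ := (k : ℂ)⁻¹ • N with hNavg
  have hNfix : ∀ b ∈ A, Φ b * N = N := by
    intro b hb
    rw [hN, Finset.mul_sum]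
    exact Fintype.sum_equiv (Equiv.mulLeft (⟨b, hb⟩ : ↥A))
      (fun a : ↥A => Φ b * Φ ↑a) (fun a : ↥A => Φ ↑a)
      (fun a => (Φmul b ↑a).trans rfl)
  set d := Module.finrank ℂ ↥W with hd
  have hproj : LinearMap.IsProj W (Matrix.toLin' Navg) := by
    constructor
    · intro v
      intro a ha
      rw [Matrix.toLin'_apply, Matrix.mulVec_mulVec, hNavg, Matrix.mul_smul, hNfix a ha]
    · intro v hv
      rw [Matrix.toLin'_apply, hNavg, Matrix.smul_mulVec]
      have : N *ᵥ v = (k : ℂ) • v := by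
        have hNv : N *ᵥ v = ∑ a : ↥A, (Φ ↑a) *ᵥ v := by
          have hmap : Matrix.toLin' N = ∑ a : ↥A, Matrix.toLin' (Φ ↑a) := by
            rw [hN]; exact map_sum Matrix.toLin' _ _
          calc N *ᵥ v = Matrix.toLin' N v := (Matrix.toLin'_apply _ _).symm
            _ = (∑ a : ↥A, Matrix.toLin' (Φ ↑a)) v := by rw [hmap]
            _ = ∑ a : ↥A, Matrix.toLin' (Φ ↑a) v := LinearMap.sum_apply _ _ _
            _ = ∑ a : ↥A, (Φ ↑a) *ᵥ v := by simp [Matrix.toLin'_apply]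
        rw [hNv]
        have : ∀ a : ↥A, (Φ ↑a) *ᵥ v = v := fun a => hv ↑a a.2
        simp only [this, Finset.sum_const, Finset.card_univ, ← hk]
        rw [← Nat.cast_smul_eq_nsmul ℂ]
      rw [this, smul_smul, inv_mul_cancel₀ hk0, one_smul]
  -- trace computation
  have htrace : ∑ a : ↥A, (Φ ↑a).trace = (k : ℂ) * (d : ℂ) := by
    have h1 : LinearMap.trace ℂ _ (Matrix.toLin' Navg) = (d : ℂ) := hproj.trace
    have h2 : LinearMap.trace ℂ _ (Matrix.toLin' Navg) = Navg.trace := by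
      rw [LinearMap.trace_eq_matrix_trace ℂ (Pi.basisFun ℂ (Fin n)),
        LinearMap.toMatrix_eq_toMatrix', LinearMap.toMatrix'_toLin']
    have h3 : Navg.trace = (k : ℂ)⁻¹ * ∑ a : ↥A, (Φ ↑a).trace := by
      rw [hNavg, Matrix.trace_smul, hN, Matrix.trace_sum, smul_eq_mul]
    rw [h2, h3] at h1
    field_simp at h1
    linear_combination h1
  -- integrality of traces
  have hint : ∀ a : ↥A, IsIntegral ℤ (Φ ↑a).trace := by
    intro a
    rw [Matrix.trace_eq_sum_roots_charpoly]
    apply isIntegral_multiset_sum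
    intro μ hμ
    have hμp : μ ^ p = 1 := root_pow_eq_one (hΦpow ↑a a.2) hμ
    refine ⟨Polynomial.X ^ p - Polynomial.C 1, Polynomial.monic_X_pow_sub_C 1 hp.ne_zero, ?_⟩
    simp [hμp]
  set O := integralClosure ℤ ℂ with hO
  set t : ↥A → O := fun a => ⟨(Φ ↑a).trace, hint a⟩ with ht
  have hsumt : (∑ a : ↥A, t a) = ((k * d : ℕ) : O) := by
    apply Subtype.ext
    show ((∑ a : ↥A, t a : O) : ℂ) = ((k * d : ℕ) : ℂ)
    rw [AddSubmonoidClass.coe_finset_sum]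
    push_cast
    exact htrace
  have ht1 : t 1 = ((n : ℕ) : O) := by
    apply Subtype.ext
    show (Φ ↑(1 : ↥A)).trace = ((n : ℕ) : ℂ)
    rw [OneMemClass.coe_one, Φone, Matrix.trace_one]
    simp
  have htinv : ∀ a : ↥A, t a⁻¹ = t a := by
    intro a
    apply Subtype.ext
    show (Φ ↑(a⁻¹)).trace = (Φ ↑a).trace
    rw [show ((a⁻¹ : ↥A) : G) = (↑a)⁻¹ from rfl]
    exact htr ↑a
  -- work modulo 2 in the ring of algebraic integers
  have hmod : ∃ z : O, ((k * d : ℕ) : O) - ((n : ℕ) : O) = 2 * z := by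
    obtain ⟨z, hzz⟩ := sum_involution_even (Finset.univ.erase (1 : ↥A)) t (fun a => a⁻¹)
      (fun a ha => Finset.mem_erase.2
        ⟨by simpa using (Finset.mem_erase.1 ha).1, Finset.mem_univ _⟩)
      (fun a _ => inv_inv a)
      (fun a ha => by
        have ha1 : a ≠ 1 := (Finset.mem_erase.1 ha).1
        intro heq
        have heq' : a⁻¹ = a := heq
        have hsq : a ^ 2 = 1 := by
          rw [pow_two]
          nth_rewrite 1 [← heq']
          exact inv_mul_cancel a
        have h2dvd : orderOf a ∣ 2 := orderOf_dvd_of_pow_eq_one hsq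
        have hpdvd : orderOf a ∣ p := orderOf_dvd_of_pow_eq_one (hApow a)
        rcases (Nat.Prime.eq_one_or_self_of_dvd hp _ hpdvd) with h1 | h1
        · exact ha1 (orderOf_eq_one_iff.1 h1)
        · rw [h1] at h2dvd
          have hple : p ≤ 2 := Nat.le_of_dvd (by norm_num) h2dvd
          have := hp.two_le
          interval_cases p
          · simp [Nat.odd_iff] at hodd)
      (fun a _ => htinv a)
    refine ⟨z, ?_⟩
    have hsplit : ∑ a ∈ Finset.univ.erase (1 : ↥A), t a + t 1 =
        ∑ a : ↥A, t a := Finset.sum_erase_add _ _ (Finset.mem_univ _)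
    rw [← hsumt, ← hsplit, hzz, ht1]
    ring
  obtain ⟨z, hz⟩ := hmod
  -- deduce parity
  have hzC : ((k : ℂ) * (d : ℂ)) - ((n : ℕ) : ℂ) = 2 * (z : ℂ) := by
    have h := congrArg (algebraMap O ℂ) hz
    simp only [_root_.map_sub, _root_.map_mul, map_natCast] at h
    have halg : ∀ x : O, algebraMap O ℂ x = (x : ℂ) := fun x => rfl
    rw [halg, halg] at h
    rw [show ((2 : O) : ℂ) = 2 from rfl] at h
    push_cast at h ⊢
    linear_combination h
  set m : ℤ := (k : ℤ) * d - n with hm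
  have hzval : (z : ℂ) = algebraMap ℚ ℂ ((m : ℚ) / 2) := by
    rw [eq_ratCast (algebraMap ℚ ℂ)]
    push_cast [hm]
    rw [eq_div_iff (two_ne_zero (α := ℂ))]
    linear_combination -hzC
  have hzint : IsIntegral ℤ ((m : ℚ) / 2) := by
    rw [← isIntegral_algebraMap_iff (algebraMap ℚ ℂ).injective]
    rw [← hzval]
    exact z.2
  obtain ⟨y, hy⟩ := IsIntegrallyClosed.isIntegral_iff.1 hzint
  have hmy : m = 2 * y := by
    have h1 : ((y : ℚ)) = (m : ℚ) / 2 := by rw [← hy]; simp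
    rw [eq_div_iff (two_ne_zero (α := ℚ))] at h1
    have h2 : (m : ℚ) = 2 * (y : ℚ) := by linear_combination -h1
    exact_mod_cast h2
  -- k is odd
  have hkodd : Odd k := by
    rw [← Nat.not_even_iff_odd]
    intro hke
    haveI : Fact (Nat.Prime 2) := ⟨Nat.prime_two⟩
    obtain ⟨a, ha⟩ := exists_prime_orderOf_dvd_card 2 (even_iff_two_dvd.1 hke)
    have hpdvd : orderOf a ∣ p := orderOf_dvd_of_pow_eq_one (hApow a)
    rw [ha] at hpdvd
    have := (Nat.prime_dvd_prime_iff_eq Nat.prime_two hp).1 hpdvd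
    rw [← this] at hodd
    simp [Nat.odd_iff] at hodd
  -- d is odd, in particular nonzero
  have hdodd : Odd d := by
    have hkd : Odd ((k : ℤ) * (d : ℤ)) := by
      rcases hn with ⟨n', hn'⟩
      refine ⟨y + n', ?_⟩
      rw [hm] at hmy
      push_cast [hn'] at hmy ⊢
      linarith
    rw [Int.odd_mul] at hkd
    exact_mod_cast hkd.2
  have hdne : d ≠ 0 := by
    intro h0
    rw [h0] at hdodd
    simp [Nat.odd_iff] at hdodd
  -- conclude via irreducibility
  rcases hirr W hinv with hbot | htop
  · exfalso
    apply hdne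
    rw [hd, hbot]
    exact finrank_bot ℂ _
  · intro a ha
    apply Units.ext
    show Φ a = 1
    ext i j
    have hv : Pi.single j (1 : ℂ) ∈ W := htop ▸ Submodule.mem_top
    have := congrFun (hv a ha) i
    rw [Matrix.mulVec_single_one] at this
    simp only [Matrix.col_apply] at this
    rw [this, Matrix.one_apply, Pi.single_apply]
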